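/- arXiv:2507.15879 — 6 statements merged into one kernel-verified Lean document; each statement's English description precedes it below -/
import Mathlib

section
/- The complex square map z ↦ z² sends any line in ℂ not passing through the origin to a parabola focused at the origin. -/
open Complex

/-- The complex square map sends any line in ℂ not passing through the origin
to a parabola focused at the origin (focus-directrix form `|q| = d - ⟨q, u⟩`). -/
theorem square_map_sends_line_to_focused_parabola
    (a b : ℂ) (hb : b ≠ 0) (h0 : ∀ t : ℝ, a + t • b ≠ 0) :
    ∃ (u : ℂ) (d : ℝ), ‖u‖ = 1 ∧ 0 < d ∧
      ∀ t : ℝ, ‖(a + t • b) ^ 2‖ = d - ((a + t • b) ^ 2 * (starRingEnd ℂ) u).re := by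
  have hnb : Complex.normSq b ≠ 0 := (normSq_pos.mpr hb).ne'
  set c : ℝ := (a * (starRingEnd ℂ) b).re / Complex.normSq b with hc
  set p : ℂ := a - c • b with hpdef
  have hp : p ≠ 0 := by
    have := h0 (-c)
    simpa [hpdef, neg_smul, sub_eq_add_neg] using this
  have hnp : 0 < Complex.normSq p := normSq_pos.mpr hp
  have hkey : c * Complex.normSq b = (a * (starRingEnd ℂ) b).re :=
    div_mul_cancel₀ _ hnb
  have horth : p.re * b.re + p.im * b.im = 0 := by
    simp only [Complex.normSq_apply, mul_re, RingHom.coe_coe, conj_re, conj_im] at hkey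
    simp only [hpdef, sub_re, sub_im, real_smul, mul_re, mul_im, ofReal_re, ofReal_im]
    linear_combination -hkey
  refine ⟨p ^ 2 / (Complex.normSq p : ℂ), 2 * Complex.normSq p, ?_, by positivity, ?_⟩
  · rw [norm_div, norm_pow, Complex.norm_real, Real.norm_eq_abs, abs_of_pos hnp,
      ← Complex.sq_norm p]
    exact div_self (pow_ne_zero 2 (norm_ne_zero_iff.mpr hp))
  · intro t
    have hz : a + t • b = p + (t + c) • b := by
      simp only [hpdef]
      push_cast [real_smul]
      ring
    rw [hz]
    set s : ℝ := t + c with hs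
    rw [norm_pow, Complex.sq_norm]
    rw [map_div₀, Complex.conj_ofReal, ← mul_div_assoc, Complex.div_ofReal_re]
    have h1 : Complex.normSq (p + s • b) = Complex.normSq p + s ^ 2 * Complex.normSq b := by
      simp only [Complex.normSq_apply, add_re, add_im, real_smul, mul_re, mul_im,
        ofReal_re, ofReal_im]
      linear_combination (2 * s) * horth
    have h2 : ((p + s • b) ^ 2 * (starRingEnd ℂ) (p ^ 2)).re
        = Complex.normSq p ^ 2 - s ^ 2 * Complex.normSq b * Complex.normSq p := by
      simp only [pow_two, map_mul, mul_re, mul_im, add_re, add_im, real_smul,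
        ofReal_re, ofReal_im, RingHom.coe_coe, conj_re, conj_im, Complex.normSq_apply]
      linear_combination (2 * s * (p.re * p.re + p.im * p.im)
        + 2 * s ^ 2 * (p.re * b.re + p.im * b.im)) * horth
    rw [h1, h2]
    field_simp
    ring
end

section
/- If E ⊆ ℂ is a (solid) ellipse centered at the origin, then its image under the complex square map z ↦ z² is a (solid) ellipse with one focus at the origin. -/
private lemma key_equiv (c : ℂ) (a : ℝ) (ha : ‖c‖ < a) (z : ℂ) :
    ‖z - c‖ + ‖z + c‖ ≤ 2 * a ↔
      ‖z ^ 2 - c ^ 2‖ + ‖z ^ 2‖ ≤ 2 * (a ^ 2 - ‖c‖ ^ 2 / 2) := by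
  have hc0 : (0:ℝ) ≤ ‖c‖ := norm_nonneg c
  have ha0 : (0:ℝ) < a := lt_of_le_of_lt hc0 ha
  have par : ‖z - c‖ ^ 2 + ‖z + c‖ ^ 2 = 2 * ‖z‖ ^ 2 + 2 * ‖c‖ ^ 2 := by
    simp only [Complex.sq_norm, Complex.normSq_sub,
      Complex.normSq_add]
    ring
  have hprod : ‖z ^ 2 - c ^ 2‖ = ‖z - c‖ * ‖z + c‖ := by
    rw [← norm_mul]; ring_nf
  have hsq : ‖z ^ 2‖ = ‖z‖ ^ 2 := by rw [norm_pow]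
  have hp : (0:ℝ) ≤ ‖z - c‖ := norm_nonneg _
  have hq : (0:ℝ) ≤ ‖z + c‖ := norm_nonneg _
  rw [hprod, hsq]
  constructor
  · intro h
    nlinarith [sq_nonneg (‖z - c‖ + ‖z + c‖), sq_nonneg (‖z - c‖ - ‖z + c‖)]
  · intro h
    nlinarith [sq_nonneg (‖z - c‖ + ‖z + c‖ - 2 * a)]

/-- The image under the complex square map of a solid ellipse centered at the
origin, `{z : |z - c| + |z + c| ≤ 2a}` with `a > |c|`, is a solid ellipse with
one focus at the origin: a set of the form `{w : |w - f₁| + |w| ≤ 2a'}`. -/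
theorem square_image_centered_ellipse_is_focused_ellipse
    (c : ℂ) (a : ℝ) (ha : ‖c‖ < a) :
    ∃ (f₁ : ℂ) (a' : ℝ), ‖f₁‖ < 2 * a' ∧
      (fun z : ℂ => z ^ 2) '' {z : ℂ | ‖z - c‖ + ‖z + c‖ ≤ 2 * a} =
        {w : ℂ | ‖w - f₁‖ + ‖w‖ ≤ 2 * a'} := by
  have hc0 : (0:ℝ) ≤ ‖c‖ := norm_nonneg c
  refine ⟨c ^ 2, a ^ 2 - ‖c‖ ^ 2 / 2, ?_, ?_⟩
  · have : ‖c ^ 2‖ = ‖c‖ ^ 2 := norm_pow c 2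
    rw [this]
    nlinarith
  · ext w
    simp only [Set.mem_image, Set.mem_setOf_eq]
    constructor
    · rintro ⟨z, hz, rfl⟩
      exact (key_equiv c a ha z).mp hz
    · intro hw
      obtain ⟨z, hz⟩ := IsAlgClosed.exists_pow_nat_eq w (by norm_num : 0 < 2)
      refine ⟨z, ?_, hz⟩
      rw [← hz] at hw
      exact (key_equiv c a ha z).mpr hw
end

section
/- The preimage under the complex square map of a K-convex domain (a closed domain containing 0 in its interior whose boundary meets every parabola focused at 0 in at most two points) has the property that every line not through the origin meets its boundary in at most two points; together with central symmetry this implies the preimage is convex. -/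
open Complex Set

private lemma sq_frontier_pt (E : Set ℂ) (a b : ℂ) (t : ℝ)
    (ht : a + t • b ∈ E)
    (h : ∀ δ : ℝ, 0 < δ → ∃ t' : ℝ, |t' - t| < δ ∧ a + t' • b ∉ E) :
    a + t • b ∈ frontier E := by
  simp only [frontier, Set.mem_diff]
  refine ⟨subset_closure ht, fun hint => ?_⟩
  rw [mem_interior_iff_mem_nhds, Metric.mem_nhds_iff] at hint
  obtain ⟨ρ, hρ, hball⟩ := hint
  obtain ⟨t', ht', hnt'⟩ := h (ρ / (‖b‖ + 1)) (by positivity)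
  apply hnt'
  apply hball
  have hd : dist (a + t' • b) (a + t • b) = |t' - t| * ‖b‖ := by
    rw [dist_eq_norm]
    have : a + t' • b - (a + t • b) = (t' - t) • b := by
      rw [sub_smul]; ring
    rw [this, norm_smul, Real.norm_eq_abs]
  rw [Metric.mem_ball, hd]
  calc |t' - t| * ‖b‖ < ρ / (‖b‖ + 1) * (‖b‖ + 1) := by
        apply mul_lt_mul' (le_of_lt ?_) (by linarith) (norm_nonneg _) (by positivity)
        · exact ht'
      _ = ρ := by field_simp

private lemma sq_three_not (s : Set ℂ) (x y z : ℂ) (hx : x ∈ s) (hy : y ∈ s) (hz : z ∈ s)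
    (hxy : x ≠ y) (hxz : x ≠ z) (hyz : y ≠ z) : ¬ s.encard ≤ 2 := by
  intro h
  have h3 : ({x, y, z} : Set ℂ) ⊆ s := by
    intro w hw
    rcases hw with rfl | rfl | rfl
    exacts [hx, hy, hz]
  have e : ({x, y, z} : Set ℂ).encard = 3 := by
    rw [Set.encard_insert_of_notMem (by simp [hxy, hxz]), Set.encard_pair hyz]; rfl
  have := (Set.encard_mono h3).trans h
  rw [e] at this
  norm_num at this

private lemma sq_line_interval (E : Set ℂ) (hEc : IsClosed E)
    (R : ℝ) (hEb : ∀ z ∈ E, ‖z‖ ≤ R)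
    (a b : ℂ) (hb : b ≠ 0)
    (hline : (frontier E ∩ {z : ℂ | ∃ t : ℝ, z = a + t • b}).encard ≤ 2)
    (t₀ : ℝ) (h₀ : a + t₀ • b ∈ interior E)
    (t₁ t₂ t₃ : ℝ) (h₁ : a + t₁ • b ∈ E) (h₃ : a + t₃ • b ∈ E)
    (h12 : t₁ ≤ t₂) (h23 : t₂ ≤ t₃) : a + t₂ • b ∈ E := by
  by_contra h₂
  set φ : ℝ → ℂ := fun t => a + t • b with hφ
  have φinj : Function.Injective φ := by
    intro s t hst
    have : s • b = t • b := by
      have := hst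
      simp only [hφ, add_right_inj] at this
      exact this
    have h2 : (s - t) • b = 0 := by rw [sub_smul, this, sub_self]
    rcases smul_eq_zero.mp h2 with h | h
    · linarith [sub_eq_zero.mp (by exact_mod_cast h)]
    · exact absurd h hb
  set S : Set ℝ := {t : ℝ | a + t • b ∈ E} with hS
  have hScl : IsClosed S := hEc.preimage (by continuity)
  have hSbd : ∀ t ∈ S, |t| ≤ (R + ‖a‖) / ‖b‖ := by
    intro t ht
    have h1 : ‖a + t • b‖ ≤ R := hEb _ ht
    have h2 : |t| * ‖b‖ ≤ ‖a + t • b‖ + ‖a‖ := by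
      have he1 : t • b = (a + t • b) - a := by ring
      have := norm_sub_le (a + t • b) a
      calc |t| * ‖b‖ = ‖t • b‖ := by rw [norm_smul, Real.norm_eq_abs]
        _ = ‖(a + t • b) - a‖ := by rw [← he1]
        _ ≤ ‖a + t • b‖ + ‖a‖ := this
    have hbpos : 0 < ‖b‖ := norm_pos_iff.mpr hb
    rw [le_div_iff₀ hbpos]
    linarith
  have hBA : BddAbove S := ⟨(R + ‖a‖) / ‖b‖, fun t ht => (abs_le.mp (hSbd t ht)).2⟩
  have hBB : BddBelow S := ⟨-((R + ‖a‖) / ‖b‖), fun t ht => (abs_le.mp (hSbd t ht)).1⟩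
  have hSne : t₁ ∈ S := h₁
  have ht2 : t₂ ∉ S := h₂
  -- interior interval around t₀
  obtain ⟨ρ, hρ, hball⟩ := Metric.mem_nhds_iff.mp (mem_interior_iff_mem_nhds.mp h₀)
  have hη : ∀ t : ℝ, |t - t₀| < ρ / (‖b‖ + 1) → t ∈ S := by
    intro t ht
    show a + t • b ∈ E
    apply hball
    rw [Metric.mem_ball, dist_eq_norm]
    have : a + t • b - (a + t₀ • b) = (t - t₀) • b := by rw [sub_smul]; ring
    rw [this, norm_smul, Real.norm_eq_abs]
    calc |t - t₀| * ‖b‖ < ρ / (‖b‖ + 1) * (‖b‖ + 1) := by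
          apply mul_lt_mul' (le_of_lt ht) (by linarith) (norm_nonneg _) (by positivity)
        _ = ρ := by field_simp
  set η := ρ / (‖b‖ + 1) with hηdef
  have hηpos : 0 < η := by positivity
  have ht₀S : t₀ ∈ S := hη t₀ (by simp [hηpos])
  -- the four special points
  set c := sInf S with hc
  set e := sSup S with he
  set g' := sSup (S ∩ Iic t₂) with hg'
  set g := sInf (S ∩ Ici t₂) with hg
  have hg'ne : (S ∩ Iic t₂).Nonempty := ⟨t₁, hSne, h12⟩
  have hgne : (S ∩ Ici t₂).Nonempty := ⟨t₃, h₃, h23⟩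
  have hg'cl : IsClosed (S ∩ Iic t₂) := hScl.inter isClosed_Iic
  have hgcl : IsClosed (S ∩ Ici t₂) := hScl.inter isClosed_Ici
  have hg'mem : g' ∈ S ∩ Iic t₂ := hg'cl.csSup_mem hg'ne (hBA.mono Set.inter_subset_left)
  have hgmem : g ∈ S ∩ Ici t₂ := hgcl.csInf_mem hgne (hBB.mono Set.inter_subset_left)
  have hcmem : c ∈ S := hScl.csInf_mem ⟨t₁, hSne⟩ hBB
  have hemem : e ∈ S := hScl.csSup_mem ⟨t₁, hSne⟩ hBA
  have hg'lt : g' < t₂ := lt_of_le_of_ne hg'mem.2 (fun h => ht2 (h ▸ hg'mem.1))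
  have hglt : t₂ < g := lt_of_le_of_ne hgmem.2 (fun h => ht2 (h.symm ▸ hgmem.1))
  have hcle : c ≤ g' := csInf_le hBB hg'mem.1
  have hgle : g ≤ e := le_csSup hBA hgmem.1
  -- frontier points
  have hfr_c : φ c ∈ frontier E := by
    apply sq_frontier_pt E a b c hcmem
    intro δ hδ
    refine ⟨c - δ/2, by rw [abs_sub_lt_iff]; constructor <;> linarith, ?_⟩
    intro hmem
    have : c ≤ c - δ/2 := csInf_le hBB hmem
    linarith
  have hfr_e : φ e ∈ frontier E := by
    apply sq_frontier_pt E a b e hemem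
    intro δ hδ
    refine ⟨e + δ/2, by rw [abs_sub_lt_iff]; constructor <;> linarith, ?_⟩
    intro hmem
    have : e + δ/2 ≤ e := le_csSup hBA hmem
    linarith
  have hfr_g' : φ g' ∈ frontier E := by
    apply sq_frontier_pt E a b g' hg'mem.1
    intro δ hδ
    refine ⟨min (g' + δ/2) t₂, ?_, ?_⟩
    · have hm1 := min_le_left (g' + δ/2) t₂
      have hm2 : g' < min (g' + δ/2) t₂ := lt_min (by linarith) hg'lt
      rw [abs_sub_lt_iff]; constructor <;> linarith
    · intro hmem
      have h1 : min (g' + δ/2) t₂ ≤ g' := le_csSup (hBA.mono Set.inter_subset_left)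
        ⟨hmem, Set.mem_Iic.mpr (min_le_right _ _)⟩
      have h2 : g' < min (g' + δ/2) t₂ := lt_min (by linarith) hg'lt
      linarith
  have hfr_g : φ g ∈ frontier E := by
    apply sq_frontier_pt E a b g hgmem.1
    intro δ hδ
    refine ⟨max (g - δ/2) t₂, ?_, ?_⟩
    · have hm1 := le_max_left (g - δ/2) t₂
      have hm2 : max (g - δ/2) t₂ < g := max_lt (by linarith) hglt
      rw [abs_sub_lt_iff]; constructor <;> linarith
    · intro hmem
      have h1 : g ≤ max (g - δ/2) t₂ := csInf_le (hBB.mono Set.inter_subset_left)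
        ⟨hmem, Set.mem_Ici.mpr (le_max_right _ _)⟩
      have h2 : max (g - δ/2) t₂ < g := max_lt (by linarith) hglt
      linarith
  have hmemline : ∀ t : ℝ, φ t ∈ {z : ℂ | ∃ t : ℝ, z = a + t • b} := fun t => ⟨t, rfl⟩
  have hdist : ∀ s t : ℝ, s ≠ t → φ s ≠ φ t := fun s t hst h => hst (φinj h)
  rcases lt_or_eq_of_le hcle with hlt | heq
  · exact sq_three_not (frontier E ∩ {z : ℂ | ∃ t : ℝ, z = a + t • b}) (φ c) (φ g') (φ g)
      ⟨hfr_c, hmemline c⟩ ⟨hfr_g', hmemline g'⟩ ⟨hfr_g, hmemline g⟩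
      (hdist _ _ (ne_of_lt hlt)) (hdist _ _ (by intro h; linarith))
      (hdist _ _ (by intro h; linarith)) hline
  rcases lt_or_eq_of_le hgle with hlt | heq2
  · exact sq_three_not (frontier E ∩ {z : ℂ | ∃ t : ℝ, z = a + t • b}) (φ g') (φ g) (φ e)
      ⟨hfr_g', hmemline g'⟩ ⟨hfr_g, hmemline g⟩ ⟨hfr_e, hmemline e⟩
      (hdist _ _ (by intro h; linarith)) (hdist _ _ (by intro h; linarith))
      (hdist _ _ (ne_of_lt hlt)) hline
  -- degenerate case: S = {g', g}
  have hS2 : ∀ s ∈ S, s = g' ∨ s = g := by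
    intro s hs
    rcases le_or_gt s t₂ with h | h
    · left
      have h1 : s ≤ g' := le_csSup (hBA.mono Set.inter_subset_left) ⟨hs, h⟩
      have h2 : c ≤ s := csInf_le hBB hs
      rw [← heq] at h1
      linarith
    · right
      have h1 : g ≤ s := csInf_le (hBB.mono Set.inter_subset_left) ⟨hs, le_of_lt h⟩
      have h2 : s ≤ e := le_csSup hBA hs
      rw [← heq2] at h2
      linarith
  have hA := hS2 t₀ ht₀S
  have hB := hS2 (t₀ + η/2) (hη _ (by rw [abs_sub_lt_iff]; constructor <;> linarith))
  have hC := hS2 (t₀ + η/4) (hη _ (by rw [abs_sub_lt_iff]; constructor <;> linarith))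
  rcases hA with hA | hA <;> rcases hB with hB | hB <;> rcases hC with hC | hC <;> linarith

private lemma sq_line_to_parabola (D : Set ℂ)
    (hK : ∀ (u : ℂ) (d : ℝ), ‖u‖ = 1 → 0 < d →
      (frontier D ∩ {q : ℂ | ‖q‖ = d - (q * (starRingEnd ℂ) u).re}).encard ≤ 2)
    (a b : ℂ) (hb : b ≠ 0) (hmiss : ∀ t : ℝ, a + t • b ≠ 0) :
    (frontier ((fun z : ℂ => z ^ 2) ⁻¹' D) ∩
      {z : ℂ | ∃ t : ℝ, z = a + t • b}).encard ≤ 2 := by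
  set E : Set ℂ := (fun z : ℂ => z ^ 2) ⁻¹' D with hE
  set r : ℝ := (a * (starRingEnd ℂ) b).re / normSq b with hr
  set w : ℂ := a - r • b with hw
  have hbn : normSq b ≠ 0 := by
    intro h
    exact hb (normSq_eq_zero.mp h)
  have hbn' : b.re * b.re + b.im * b.im ≠ 0 := by
    rw [← Complex.normSq_apply]; exact hbn
  have hwne : w ≠ 0 := by
    intro h
    apply hmiss (-r)
    have ha : a = r • b := by rwa [← sub_eq_zero]
    rw [ha]
    simp only [Complex.real_smul]
    push_cast
    ring
  have hN : 0 < normSq w := normSq_pos.mpr hwne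
  have hzw : ∀ t : ℝ, ((a + t • b) * (starRingEnd ℂ) w).re = normSq w := by
    intro t
    simp only [hw, hr, Complex.normSq_apply, Complex.mul_re, Complex.mul_im,
      Complex.add_re, Complex.add_im, Complex.sub_re, Complex.sub_im,
      Complex.conj_re, Complex.conj_im, Complex.smul_re, Complex.smul_im,
      smul_eq_mul]
    have hbn'' : b.re ^ 2 + b.im ^ 2 ≠ 0 := by rw [pow_two, pow_two]; exact hbn'
    field_simp
    ring
  set u : ℂ := (normSq w : ℝ)⁻¹ • (w ^ 2) with hu_def
  set d : ℝ := 2 * normSq w with hd_def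
  have hu : ‖u‖ = 1 := by
    rw [hu_def, norm_smul, Real.norm_eq_abs, abs_of_pos (inv_pos.mpr hN)]
    rw [norm_pow, Complex.sq_norm]
    exact inv_mul_cancel₀ (ne_of_gt hN)
  have hd : 0 < d := by rw [hd_def]; linarith
  have parab : ∀ t : ℝ, ‖(a + t • b) ^ 2‖ =
      d - ((a + t • b) ^ 2 * (starRingEnd ℂ) u).re := by
    intro t
    set z : ℂ := a + t • b with hz
    set ζ : ℂ := z * (starRingEnd ℂ) w with hζ
    have h4 : ζ.re = normSq w := hzw t
    have h2 : (z ^ 2 * (starRingEnd ℂ) u).re = (normSq w)⁻¹ * (ζ ^ 2).re := by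
      have hcu : (starRingEnd ℂ) u = (normSq w : ℝ)⁻¹ • ((starRingEnd ℂ) w) ^ 2 := by
        rw [hu_def]
        simp only [Complex.real_smul, map_mul, map_pow, map_inv₀, Complex.conj_ofReal]
      rw [hcu]
      have : z ^ 2 * ((normSq w : ℝ)⁻¹ • ((starRingEnd ℂ) w) ^ 2)
          = (normSq w : ℝ)⁻¹ • (ζ ^ 2) := by
        rw [hζ]
        simp only [Complex.real_smul]
        ring
      rw [this, Complex.smul_re, smul_eq_mul]
    have h3 : (ζ ^ 2).re = ζ.re ^ 2 - ζ.im ^ 2 := by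
      simp only [pow_two, Complex.mul_re]
    have h5 : normSq ζ = normSq z * normSq w := by
      rw [hζ, map_mul, normSq_conj]
    have h6 : normSq ζ = ζ.re ^ 2 + ζ.im ^ 2 := by
      rw [Complex.normSq_apply]; ring
    have h7 : ‖z ^ 2‖ = normSq z := by
      rw [norm_pow, Complex.sq_norm]
    rw [h7, h2, h3, h4, hd_def]
    have h8 : normSq z * normSq w = normSq w ^ 2 + ζ.im ^ 2 := by
      rw [← h5, h6, h4]
    field_simp
    nlinarith [h8]
  have hfr_sub : frontier E ⊆ (fun z : ℂ => z ^ 2) ⁻¹' frontier D := by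
    intro z hz
    simp only [frontier, Set.mem_diff] at hz ⊢
    simp only [Set.mem_preimage]
    constructor
    · exact Continuous.closure_preimage_subset (continuous_pow 2) D hz.1
    · intro hin
      exact hz.2 (preimage_interior_subset_interior_preimage (continuous_pow 2) hin)
  have hinj : Set.InjOn (fun z : ℂ => z ^ 2) {z : ℂ | ∃ t : ℝ, z = a + t • b} := by
    rintro z1 ⟨t1, rfl⟩ z2 ⟨t2, rfl⟩ hsq
    simp only at hsq
    have hfac : ((a + t1 • b) - (a + t2 • b)) * ((a + t1 • b) + (a + t2 • b)) = 0 := by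
      linear_combination hsq
    rcases mul_eq_zero.mp hfac with h | h
    · rw [sub_eq_zero] at h
      exact h
    · exfalso
      apply hmiss ((t1 + t2) / 2)
      simp only [Complex.real_smul] at h ⊢
      push_cast
      linear_combination h / 2
  have himg : (fun z : ℂ => z ^ 2) '' (frontier E ∩ {z : ℂ | ∃ t : ℝ, z = a + t • b})
      ⊆ frontier D ∩ {q : ℂ | ‖q‖ = d - (q * (starRingEnd ℂ) u).re} := by
    rintro q ⟨z, ⟨hzf, t, rfl⟩, rfl⟩
    exact ⟨hfr_sub hzf, parab t⟩
  calc (frontier E ∩ {z : ℂ | ∃ t : ℝ, z = a + t • b}).encard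
      = ((fun z : ℂ => z ^ 2) '' (frontier E ∩ {z : ℂ | ∃ t : ℝ, z = a + t • b})).encard :=
        (Set.InjOn.encard_image (hinj.mono Set.inter_subset_right)).symm
    _ ≤ (frontier D ∩ {q : ℂ | ‖q‖ = d - (q * (starRingEnd ℂ) u).re}).encard :=
        Set.encard_mono himg
    _ ≤ 2 := hK u d hu hd

private lemma sq_convex_of_lines (E : Set ℂ) (hEc : IsClosed E)
    (R : ℝ) (hEb : ∀ z ∈ E, ‖z‖ ≤ R)
    (h0 : (0 : ℂ) ∈ interior E)
    (hl : ∀ a b : ℂ, b ≠ 0 → (∀ t : ℝ, a + t • b ≠ 0) →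
      (frontier E ∩ {z : ℂ | ∃ t : ℝ, z = a + t • b}).encard ≤ 2) :
    Convex ℝ E := by
  obtain ⟨ε, hε, hball⟩ := Metric.isOpen_iff.mp isOpen_interior 0 h0
  -- Step G : good segments
  have hG : ∀ w x : ℂ, ‖w‖ < ε → x ∈ E → (∀ t : ℝ, w + t • (x - w) ≠ 0) →
      ∀ θ : ℝ, 0 ≤ θ → θ ≤ 1 → w + θ • (x - w) ∈ E := by
    intro w x hw hx hmiss θ hθ0 hθ1
    have hwint : w ∈ interior E := hball (by simpa using hw)
    by_cases hwx : x = w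
    · subst hwx
      simpa using interior_subset hwint
    have hb : x - w ≠ 0 := sub_ne_zero.mpr hwx
    exact sq_line_interval E hEc R hEb w (x - w) hb (hl w (x - w) hb hmiss) 0
      (by simpa using hwint) 0 θ 1 (by simpa using interior_subset hwint)
      (by simpa using hx) hθ0 hθ1
  -- star-shapedness about 0
  have hstar0 : ∀ x ∈ E, ∀ μ : ℝ, 0 ≤ μ → μ ≤ 1 → μ • x ∈ E := by
    intro x hx μ hμ0 hμ1
    by_cases hx0 : x = 0
    · subst hx0
      simpa using interior_subset (hball (by simp [hε]))
    have key : ∀ s : ℝ, 0 < s → s < ε / ‖x‖ →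
        (s • (I * x)) + μ • (x - s • (I * x)) ∈ E := by
      intro s hs hsε
      apply hG _ _ ?_ hx ?_ μ hμ0 hμ1
      · rw [norm_smul, Real.norm_eq_abs, abs_of_pos hs, norm_mul, Complex.norm_I, one_mul]
        have hxn : ‖x‖ ≠ 0 := ne_of_gt (norm_pos_iff.mpr hx0)
        calc s * ‖x‖ < (ε / ‖x‖) * ‖x‖ := by
              apply mul_lt_mul_of_pos_right hsε (norm_pos_iff.mpr hx0)
          _ = ε := div_mul_cancel₀ ε hxn
      · intro t hzero
        apply hx0
        have : (s • (I * x)) + t • (x - s • (I * x)) = ((t : ℂ) + (s : ℂ) * (1 - t) * I) * x := by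
          simp only [Complex.real_smul]
          ring
        rw [this, mul_eq_zero] at hzero
        rcases hzero with h | h
        · exfalso
          rw [Complex.ext_iff] at h
          simp [Complex.add_re, Complex.add_im] at h
          obtain ⟨h1, h2⟩ := h
          rcases h2 with h2 | h2
          · exact absurd h2 (ne_of_gt hs)
          · rw [h1] at h2; norm_num at h2
        · exact h
    have htend : Filter.Tendsto
        (fun s : ℝ => (s • (I * x)) + μ • (x - s • (I * x))) (nhdsWithin 0 (Set.Ioi 0))
        (nhds (μ • x)) := by
      have c1 : Continuous fun s : ℝ => s • (I * x) := continuous_id.smul continuous_const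
      have hcont : Continuous (fun s : ℝ => (s • (I * x)) + μ • (x - s • (I * x))) :=
        c1.add ((continuous_const.sub c1).const_smul μ)
      have := hcont.tendsto 0
      simp only [zero_smul, sub_zero, zero_add] at this
      exact this.mono_left nhdsWithin_le_nhds
    apply hEc.mem_of_tendsto htend
    have hmem : Set.Ioo (0:ℝ) (ε / ‖x‖) ∈ nhdsWithin 0 (Set.Ioi 0) := by
      apply Ioo_mem_nhdsGT_of_mem
      constructor
      · exact le_refl 0
      · exact div_pos hε (norm_pos_iff.mpr hx0)
    filter_upwards [hmem] with s hs
    exact key s hs.1 hs.2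
  -- star-shapedness about the ball
  have hL2 : ∀ x ∈ E, ∀ w : ℂ, ‖w‖ < ε → ∀ θ : ℝ, 0 ≤ θ → θ ≤ 1 →
      (1 - θ) • w + θ • x ∈ E := by
    intro x hx w hw θ hθ0 hθ1
    by_cases hgood : ∀ t : ℝ, w + t • (x - w) ≠ 0
    · have := hG w x hw hx hgood θ hθ0 hθ1
      have heq : w + θ • (x - w) = (1 - θ) • w + θ • x := by
        simp only [Complex.real_smul]; push_cast; ring
      rwa [heq] at this
    · push_neg at hgood
      obtain ⟨τ, hτ⟩ := hgood
      have hlin : (1 - (τ:ℂ)) * w + (τ:ℂ) * x = 0 := by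
        simp only [Complex.real_smul] at hτ
        linear_combination hτ
      by_cases hc : θ ≤ τ ∧ 0 < τ
      · -- point is a multiple of w, stays in the ball
        have hτ0 : (τ:ℂ) ≠ 0 := by exact_mod_cast ne_of_gt hc.2
        have hkey : (1 - θ) • w + θ • x = (((τ - θ)/τ : ℝ)) • w := by
          simp only [Complex.real_smul]
          push_cast
          field_simp
          linear_combination (θ:ℂ) * hlin
        rw [hkey]
        apply interior_subset
        apply hball
        rw [Metric.mem_ball, dist_zero_right, norm_smul, Real.norm_eq_abs]
        have hco : |(τ - θ)/τ| ≤ 1 := by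
          have h1 : (0:ℝ) ≤ (τ - θ)/τ := div_nonneg (by linarith) (by linarith)
          rw [_root_.abs_of_nonneg h1, div_le_one hc.2]
          linarith
        calc |(τ - θ)/τ| * ‖w‖ ≤ 1 * ‖w‖ :=
              mul_le_mul_of_nonneg_right hco (norm_nonneg _)
          _ = ‖w‖ := one_mul _
          _ < ε := hw
      · -- point is a multiple of x, use star-shapedness about 0
        have hc' : τ ≤ θ ∧ τ < 1 := by
          rcases le_or_gt τ 0 with h | h
          · exact ⟨le_trans h hθ0, by linarith⟩
          · rcases not_and_or.mp hc with h' | h'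
            · push_neg at h'
              exact ⟨le_of_lt h', lt_of_lt_of_le h' hθ1⟩
            · exact absurd h (by simpa using h')
        have hτ1 : (1:ℂ) - (τ:ℂ) ≠ 0 := by
          have : (τ:ℝ) ≠ 1 := ne_of_lt hc'.2
          intro hcon
          apply this
          have : (τ:ℂ) = 1 := by linear_combination -hcon
          exact_mod_cast this
        have hkey : (1 - θ) • w + θ • x = (((θ - τ)/(1 - τ) : ℝ)) • x := by
          simp only [Complex.real_smul]
          push_cast
          field_simp
          linear_combination (1 - (θ:ℂ)) * hlin
        rw [hkey]
        apply hstar0 x hx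
        · exact div_nonneg (by linarith) (by linarith)
        · rw [div_le_one (by linarith)]
          linarith
  -- scaled points are interior
  have hint : ∀ x ∈ E, ∀ σ : ℝ, 0 ≤ σ → σ < 1 → σ • x ∈ interior E := by
    intro x hx σ hσ0 hσ1
    rw [mem_interior_iff_mem_nhds, Metric.mem_nhds_iff]
    refine ⟨(1 - σ) * ε, mul_pos (by linarith) hε, fun y hy => ?_⟩
    rw [Metric.mem_ball, dist_eq_norm] at hy
    set v := y - σ • x with hv
    set w := (1 - σ)⁻¹ • v with hwdef
    have h1σ : (1 - σ) ≠ 0 := by intro h; linarith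
    have hwn : ‖w‖ < ε := by
      rw [hwdef, norm_smul, Real.norm_eq_abs, abs_of_pos (inv_pos.mpr (by linarith : (0:ℝ) < 1 - σ))]
      rw [inv_mul_lt_iff₀ (by linarith : (0:ℝ) < 1 - σ)]
      exact hy
    have hyeq : y = (1 - σ) • w + σ • x := by
      rw [hwdef, smul_smul, mul_inv_cancel₀ h1σ, one_smul, hv]
      ring
    rw [hyeq]
    exact hL2 x hx w hwn σ hσ0 (le_of_lt hσ1)
  -- final convexity
  intro x hx y hy α β hα hβ hαβ
  have hα' : α = 1 - β := by linarith
  subst hα'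
  have hβ1 : β ≤ 1 := by linarith
  by_cases hxy : x = y
  · subst hxy
    have : (1 - β) • x + β • x = ((1 - β) + β) • x := (add_smul _ _ _).symm
    rw [this]
    norm_num
    exact hx
  by_cases hline0 : ∀ t : ℝ, x + t • (y - x) ≠ 0
  · -- generic case: slide scaled lines
    have key : ∀ s : ℝ, 0 < s → s < 1 → s • ((1 - β) • x + β • y) ∈ E := by
      intro s hs0 hs1
      have hsne : (s:ℝ) ≠ 0 := ne_of_gt hs0
      have hb' : s • y - s • x ≠ 0 := by
        intro h
        apply hxy
        have : s • (y - x) = (0:ℂ) := by rw [smul_sub]; exact h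
        rcases smul_eq_zero.mp this with h' | h'
        · exact absurd h' hsne
        · exact (sub_eq_zero.mp h').symm ▸ rfl
      have hmiss' : ∀ t : ℝ, s • x + t • (s • y - s • x) ≠ 0 := by
        intro t
        have heq : s • x + t • (s • y - s • x) = s • (x + t • (y - x)) := by
          simp only [Complex.real_smul]; push_cast; ring
        rw [heq]
        exact smul_ne_zero hsne (hline0 t)
      have h₀' : s • x + (0:ℝ) • (s • y - s • x) ∈ interior E := by
        simpa using hint x hx s (le_of_lt hs0) hs1
      have h₁' : s • x + (0:ℝ) • (s • y - s • x) ∈ E := interior_subset h₀'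
      have h₃' : s • x + (1:ℝ) • (s • y - s • x) ∈ E := by
        have : s • x + (1:ℝ) • (s • y - s • x) = s • y := by
          simp only [Complex.real_smul]; push_cast; ring
        rw [this]
        exact hstar0 y hy s (le_of_lt hs0) (le_of_lt hs1)
      have := sq_line_interval E hEc R hEb (s • x) (s • y - s • x) hb'
        (hl _ _ hb' hmiss') 0 h₀' 0 β 1 h₁' h₃' hβ hβ1
      have heq : s • x + β • (s • y - s • x) = s • ((1 - β) • x + β • y) := by
        simp only [Complex.real_smul]; push_cast; ring
      rwa [heq] at this
    have htend : Filter.Tendsto (fun s : ℝ => s • ((1 - β) • x + β • y))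
        (nhdsWithin 1 (Set.Iio 1)) (nhds ((1 - β) • x + β • y)) := by
      have hcont : Continuous fun s : ℝ => s • ((1 - β) • x + β • y) :=
        continuous_id.smul continuous_const
      have := hcont.tendsto 1
      simp only [one_smul] at this
      exact this.mono_left nhdsWithin_le_nhds
    apply hEc.mem_of_tendsto htend
    have hmem : Set.Ioo (0:ℝ) 1 ∈ nhdsWithin 1 (Set.Iio 1) :=
      Ioo_mem_nhdsLT_of_mem ⟨one_pos, le_refl 1⟩
    filter_upwards [hmem] with s hs
    exact key s hs.1 hs.2
  · -- the line through x and y passes through 0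
    push_neg at hline0
    obtain ⟨τ, hτ⟩ := hline0
    have hlin : (1 - (τ:ℂ)) * x + (τ:ℂ) * y = 0 := by
      simp only [Complex.real_smul] at hτ
      linear_combination hτ
    by_cases hc : β ≤ τ ∧ 0 < τ
    · have hτ0 : (τ:ℂ) ≠ 0 := by exact_mod_cast ne_of_gt hc.2
      have hkey : (1 - β) • x + β • y = (((τ - β)/τ : ℝ)) • x := by
        simp only [Complex.real_smul]
        push_cast
        field_simp
        linear_combination (β:ℂ) * hlin
      rw [hkey]
      apply hstar0 x hx
      · exact div_nonneg (by linarith) (by linarith)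
      · rw [div_le_one hc.2]; linarith
    · have hc' : τ ≤ β ∧ τ < 1 := by
        rcases le_or_gt τ 0 with h | h
        · exact ⟨le_trans h hβ, by linarith⟩
        · rcases not_and_or.mp hc with h' | h'
          · push_neg at h'
            exact ⟨le_of_lt h', lt_of_lt_of_le h' hβ1⟩
          · exact absurd h (by simpa using h')
      have hτ1 : (1:ℂ) - (τ:ℂ) ≠ 0 := by
        have : (τ:ℝ) ≠ 1 := ne_of_lt hc'.2
        intro hcon
        apply this
        have : (τ:ℂ) = 1 := by linear_combination -hcon
        exact_mod_cast this
      have hkey : (1 - β) • x + β • y = (((β - τ)/(1 - τ) : ℝ)) • y := by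
        simp only [Complex.real_smul]
        push_cast
        field_simp
        linear_combination (1 - (β:ℂ)) * hlin
      rw [hkey]
      apply hstar0 y hy
      · exact div_nonneg (by linarith) (by linarith)
      · rw [div_le_one (by linarith)]; linarith

/-- The preimage under the complex square map of a K-convex domain (a compact
domain with connected boundary, containing 0 in its interior, whose boundary
meets every parabola focused at 0 in at most two points) is centrally
symmetric, its boundary meets every line not through the origin in at most two
points, and it is convex. -/
theorem square_preimage_of_K_convex_is_convex
    (D : Set ℂ) (hDclosed : IsClosed D) (hDcpt : IsCompact D)
    (h0 : (0 : ℂ) ∈ interior D) (hΓ : IsConnected (frontier D))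
    (hK : ∀ (u : ℂ) (d : ℝ), ‖u‖ = 1 → 0 < d →
      (frontier D ∩ {q : ℂ | ‖q‖ = d - (q * (starRingEnd ℂ) u).re}).encard ≤ 2) :
    (fun z : ℂ => z ^ 2) ⁻¹' D = -((fun z : ℂ => z ^ 2) ⁻¹' D) ∧
    (∀ a b : ℂ, b ≠ 0 → (∀ t : ℝ, a + t • b ≠ 0) →
      (frontier ((fun z : ℂ => z ^ 2) ⁻¹' D) ∩
        {z : ℂ | ∃ t : ℝ, z = a + t • b}).encard ≤ 2) ∧
    Convex ℝ ((fun z : ℂ => z ^ 2) ⁻¹' D) := by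
  have hEclosed : IsClosed ((fun z : ℂ => z ^ 2) ⁻¹' D) :=
    hDclosed.preimage (continuous_pow 2)
  obtain ⟨R, hR⟩ := hDcpt.isBounded.subset_closedBall 0
  have hEb : ∀ z ∈ (fun z : ℂ => z ^ 2) ⁻¹' D, ‖z‖ ≤ Real.sqrt (max R 0) := by
    intro z hz
    have h1 : ‖z ^ 2‖ ≤ R := by
      have := hR hz
      simpa [Metric.mem_closedBall, dist_zero_right] using this
    have h2 : ‖z‖ ^ 2 ≤ max R 0 := by
      rw [← norm_pow]
      exact le_trans h1 (le_max_left _ _)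
    calc ‖z‖ = Real.sqrt (‖z‖ ^ 2) := (Real.sqrt_sq (norm_nonneg z)).symm
      _ ≤ Real.sqrt (max R 0) := Real.sqrt_le_sqrt h2
  have h0E : (0 : ℂ) ∈ interior ((fun z : ℂ => z ^ 2) ⁻¹' D) := by
    apply preimage_interior_subset_interior_preimage (continuous_pow 2)
    show (0 : ℂ) ^ 2 ∈ interior D
    simpa using h0
  refine ⟨?_, fun a b hb hmiss => sq_line_to_parabola D hK a b hb hmiss, ?_⟩
  · ext z
    simp [Set.mem_neg, neg_sq]
  · exact sq_convex_of_lines _ hEclosed _ hEb h0E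
      (fun a b hb hmiss => sq_line_to_parabola D hK a b hb hmiss)
end

section
/- Zero-energy Kepler orbits are parabolas focused at the origin: if q : I → ℂ∖{0} solves q'' = −q/|q|³ with |q'|²/2 − 1/|q| = 0 and nonzero angular momentum, then the image of q lies on a parabola with focus 0. -/
open Complex

/-- Zero-energy Kepler orbits are parabolas focused at the origin: if
`q : ℝ → ℂ∖{0}` solves `q'' = -q/|q|³` with zero energy and nonzero angular
momentum `L = Im(q̄ q')`, then the orbit lies on a parabola
`{x : |x| = d - ⟨x, u⟩}` with focus 0. -/
theorem zero_energy_kepler_orbit_is_focused_parabola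
    (q v : ℝ → ℂ)
    (hq : ∀ t, q t ≠ 0)
    (hv : ∀ t, HasDerivAt q (v t) t)
    (ha : ∀ t, HasDerivAt v (-(q t) / ((‖q t‖ : ℂ) ^ 3)) t)
    (hE : ∀ t, ‖v t‖ ^ 2 / 2 - 1 / ‖q t‖ = 0)
    (t₀ : ℝ) (hL : ((starRingEnd ℂ) (q t₀) * v t₀).im ≠ 0) :
    ∃ (d : ℝ) (u : ℂ), 0 < d ∧ ‖u‖ = 1 ∧
      ∀ t, ‖q t‖ = d - (q t * (starRingEnd ℂ) u).re := by
  -- abbreviations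
  set r : ℝ → ℝ := fun t => ‖q t‖ with hrdef
  have hrpos : ∀ t, 0 < r t := fun t => norm_pos_iff.mpr (hq t)
  have hrne : ∀ t, r t ≠ 0 := fun t => (hrpos t).ne'
  have hr2 : ∀ t, (q t).re ^ 2 + (q t).im ^ 2 = r t ^ 2 := by
    intro t
    rw [hrdef]
    simp only [Complex.sq_norm, Complex.normSq_apply]
    ring
  -- component derivatives of q
  have hqre : ∀ t, HasDerivAt (fun s => (q s).re) ((v t).re) t := fun t =>
    Complex.reCLM.hasFDerivAt.comp_hasDerivAt t (hv t)
  have hqim : ∀ t, HasDerivAt (fun s => (q s).im) ((v t).im) t := fun t =>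
    Complex.imCLM.hasFDerivAt.comp_hasDerivAt t (hv t)
  -- acceleration components
  have haccre : ∀ t, (-(q t) / ((‖q t‖ : ℂ) ^ 3)).re = -(q t).re / (r t) ^ 3 := by
    intro t
    rw [show ((‖q t‖ : ℂ) ^ 3) = ((r t ^ 3 : ℝ) : ℂ) by push_cast [hrdef]; ring]
    rw [Complex.div_ofReal_re, Complex.neg_re, neg_div]
  have haccim : ∀ t, (-(q t) / ((‖q t‖ : ℂ) ^ 3)).im = -(q t).im / (r t) ^ 3 := by
    intro t
    rw [show ((‖q t‖ : ℂ) ^ 3) = ((r t ^ 3 : ℝ) : ℂ) by push_cast [hrdef]; ring]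
    rw [Complex.div_ofReal_im, Complex.neg_im, neg_div]
  have hvre : ∀ t, HasDerivAt (fun s => (v s).re) (-(q t).re / (r t) ^ 3) t := fun t => by
    have h : HasDerivAt (fun s => (v s).re) ((-(q t) / ((‖q t‖ : ℂ) ^ 3)).re) t :=
      Complex.reCLM.hasFDerivAt.comp_hasDerivAt t (ha t)
    rwa [haccre t] at h
  have hvim : ∀ t, HasDerivAt (fun s => (v s).im) (-(q t).im / (r t) ^ 3) t := fun t => by
    have h : HasDerivAt (fun s => (v s).im) ((-(q t) / ((‖q t‖ : ℂ) ^ 3)).im) t :=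
      Complex.imCLM.hasFDerivAt.comp_hasDerivAt t (ha t)
    rwa [haccim t] at h
  -- angular momentum is constant
  set L : ℝ := ((starRingEnd ℂ) (q t₀) * v t₀).im with hLdef
  have hgderiv : ∀ t, HasDerivAt
      (fun s => (q s).re * (v s).im - (q s).im * (v s).re) 0 t := by
    intro t
    have h := ((hqre t).mul (hvim t)).sub ((hqim t).mul (hvre t))
    refine h.congr_deriv ?_
    ring
  have hLconst : ∀ t, (q t).re * (v t).im - (q t).im * (v t).re = L := by
    intro t
    have := is_const_of_deriv_eq_zero (f := fun s => (q s).re * (v s).im - (q s).im * (v s).re)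
      (fun s => (hgderiv s).differentiableAt) (fun s => (hgderiv s).deriv) t t₀
    rw [this, hLdef]
    simp [Complex.mul_im]
    ring
  -- derivative of r
  have hr' : ∀ t, HasDerivAt r
      (((q t).re * (v t).re + (q t).im * (v t).im) / r t) t := by
    intro t
    have hne : (q t).re ^ 2 + (q t).im ^ 2 ≠ 0 := by
      rw [hr2 t]; exact pow_ne_zero _ (hrne t)
    have h1 : HasDerivAt (fun s => (q s).re ^ 2 + (q s).im ^ 2)
        (2 * (q t).re * (v t).re + 2 * (q t).im * (v t).im) t := by
      have := ((hqre t).pow 2).add ((hqim t).pow 2)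
      refine this.congr_deriv ?_
      ring
    have h2 := (Real.hasDerivAt_sqrt hne).comp t h1
    have heq : r = fun s => Real.sqrt ((q s).re ^ 2 + (q s).im ^ 2) := by
      funext s
      rw [hrdef]
      rw [show (q s).re ^ 2 + (q s).im ^ 2 = r s ^ 2 from hr2 s]
      rw [Real.sqrt_sq (hrpos s).le]
    have h3 : HasDerivAt r
        (1 / (2 * Real.sqrt ((q t).re ^ 2 + (q t).im ^ 2)) *
          (2 * (q t).re * (v t).re + 2 * (q t).im * (v t).im)) t := by
      rw [heq]; exact h2
    convert h3 using 1
    rw [show Real.sqrt ((q t).re ^ 2 + (q t).im ^ 2) = r t by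
      rw [hr2 t, Real.sqrt_sq (hrpos t).le]]
    field_simp
  -- the LRL-type vector is constant
  set w : ℝ → ℂ := fun s => -(Complex.I * (L : ℂ)) * v s - q s / ((r s : ℝ) : ℂ) with hwdef
  have hw : ∀ t, HasDerivAt w 0 t := by
    intro t
    have hRne : ((r t : ℝ) : ℂ) ≠ 0 := Complex.ofReal_ne_zero.mpr (hrne t)
    have hdiv : HasDerivAt (fun s => q s / ((r s : ℝ) : ℂ))
        ((v t * ((r t : ℝ) : ℂ) -
          q t * ((((q t).re * (v t).re + (q t).im * (v t).im) / r t : ℝ) : ℂ)) /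
            ((r t : ℝ) : ℂ) ^ 2) t :=
      (hv t).div ((hr' t).ofReal_comp) hRne
    have h := ((ha t).const_mul (-(Complex.I * (L : ℂ)))).sub hdiv
    have hzero : -(Complex.I * (L : ℂ)) * (-(q t) / ((‖q t‖ : ℂ) ^ 3)) -
        (v t * ((r t : ℝ) : ℂ) -
          q t * ((((q t).re * (v t).re + (q t).im * (v t).im) / r t : ℝ) : ℂ)) /
            ((r t : ℝ) : ℂ) ^ 2 = 0 := by
      have e3 : ((‖q t‖ : ℂ)) ^ 3 = ((r t ^ 3 : ℝ) : ℂ) := by rw [hrdef]; push_cast; ring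
      have e2 : (((r t : ℝ) : ℂ)) ^ 2 = ((r t ^ 2 : ℝ) : ℂ) := by push_cast; ring
      rw [e3, e2]
      have h2 := hr2 t
      have hLt := hLconst t
      apply Complex.ext
      · simp only [Complex.sub_re, Complex.neg_re, Complex.mul_re, Complex.mul_im,
          Complex.I_re, Complex.I_im, Complex.ofReal_re, Complex.ofReal_im,
          Complex.div_ofReal_re, Complex.div_ofReal_im, Complex.neg_im,
          Complex.zero_re, Complex.zero_im]
        field_simp [hrne t]
        linear_combination ((q t).im) * hLt + ((v t).re) * h2
      · simp only [Complex.sub_im, Complex.neg_im, Complex.mul_im, Complex.mul_re,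
          Complex.I_re, Complex.I_im, Complex.ofReal_re, Complex.ofReal_im,
          Complex.div_ofReal_re, Complex.div_ofReal_im, Complex.neg_re,
          Complex.zero_re, Complex.zero_im]
        field_simp [hrne t]
        linear_combination (-(q t).re) * hLt + ((v t).im) * h2
    exact hzero ▸ h
  have hwconst : ∀ t, w t = w t₀ := fun t =>
    is_const_of_deriv_eq_zero (fun s => (hw s).differentiableAt)
      (fun s => (hw s).deriv) t t₀
  have hwre : ∀ t, (w t).re = L * (v t).im - (q t).re / r t := by
    intro t
    simp [hwdef, Complex.mul_re, Complex.mul_im, Complex.div_ofReal_re]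
  have hwim : ∀ t, (w t).im = -(L * (v t).re) - (q t).im / r t := by
    intro t
    simp [hwdef, Complex.mul_re, Complex.mul_im, Complex.div_ofReal_im]
  have hvnorm : ∀ t, ((v t).re ^ 2 + (v t).im ^ 2) * r t = 2 := by
    intro t
    have h := hE t
    have hv2 : ‖v t‖ ^ 2 = (v t).re ^ 2 + (v t).im ^ 2 := by
      simp [Complex.sq_norm, Complex.normSq_apply]
      ring
    rw [hv2] at h
    have hrr : ‖q t‖ = r t := rfl
    rw [hrr] at h
    field_simp [hrne t] at h
    linarith
  refine ⟨L ^ 2, w t₀, pow_two_pos_of_ne_zero hL, ?_, ?_⟩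
  · -- norm of u is 1
    have h1 : ‖w t₀‖ ^ 2 = (w t₀).re ^ 2 + (w t₀).im ^ 2 := by
      simp [Complex.sq_norm, Complex.normSq_apply]
      ring
    have h2 : (w t₀).re ^ 2 + (w t₀).im ^ 2 = 1 := by
      rw [hwre t₀, hwim t₀]
      have hv2 := hvnorm t₀
      have hq2 := hr2 t₀
      have hLt := hLconst t₀
      have hrn := hrne t₀
      field_simp
      linear_combination (L^2 * r t₀) * hv2 + hq2 + (-2 * L * r t₀) * hLt
    have h3 : (‖w t₀‖ - 1) * (‖w t₀‖ + 1) = 0 := by nlinarith [h1, h2]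
    rcases mul_eq_zero.mp h3 with h | h
    · linarith
    · nlinarith [norm_nonneg (w t₀)]
  · intro t
    have hmul : (q t * (starRingEnd ℂ) (w t₀)).re =
        (q t).re * (w t₀).re + (q t).im * (w t₀).im := by
      simp [Complex.mul_re]
    rw [hmul, ← hwconst t, hwre t, hwim t]
    have hLt := hLconst t
    have hq2 := hr2 t
    have hrn := hrne t
    field_simp
    rw [show ‖q t‖ = r t from rfl]
    linear_combination (r t * L) * hLt - hq2
end

section
/- A parabola can intersect an ellipse in 4 points; consequently there exist strictly convex domains that are not K-convex: there is an ellipse E and a parabola P focused at a point O in the interior of E with #(P ∩ E) = 4. -/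
open Complex

lemma norm_eq_of_sq (z : ℂ) (c : ℝ) (hc : 0 ≤ c) (h : z.re^2 + z.im^2 = c^2) :
    ‖z‖ = c := by
  rw [Complex.norm_def, Complex.normSq_apply]
  rw [show z.re * z.re + z.im * z.im = c^2 by nlinarith]
  exact Real.sqrt_sq hc

lemma sq_of_norm_eq (z : ℂ) (c : ℝ) (h : ‖z‖ = c) :
    z.re^2 + z.im^2 = c^2 ∧ 0 ≤ c := by
  have hc : 0 ≤ c := h ▸ norm_nonneg z
  have h2 : ‖z‖ ^ 2 = c ^ 2 := by rw [h]
  rw [Complex.sq_norm, Complex.normSq_apply] at h2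
  exact ⟨by nlinarith, hc⟩

/-- A parabola can intersect an ellipse in 4 points: there exist an ellipse `E`,
a point `O` in the interior of the corresponding solid ellipse, and a parabola
`P` focused at `O` such that `P ∩ E` has exactly four points. Hence there are
strictly convex domains that are not K-convex. -/
theorem exists_parabola_meeting_ellipse_in_four_points :
    ∃ (a b : ℝ) (O u : ℂ) (d : ℝ),
      0 < b ∧ b < a ∧
      O.re ^ 2 / a ^ 2 + O.im ^ 2 / b ^ 2 < 1 ∧
      ‖u‖ = 1 ∧ 0 < d ∧
      ({q : ℂ | ‖q - O‖ = d - ((q - O) * (starRingEnd ℂ) u).re} ∩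
        {q : ℂ | q.re ^ 2 / a ^ 2 + q.im ^ 2 / b ^ 2 = 1}).encard = 4 := by
  have h5 : (0:ℝ) < Real.sqrt 5 := Real.sqrt_pos.mpr (by norm_num)
  have ha2 : (Real.sqrt 5)^2 = 5 := Real.sq_sqrt (by norm_num)
  have hb2 : (Real.sqrt 5 / 2)^2 = 5/4 := by rw [div_pow, ha2]; norm_num
  refine ⟨Real.sqrt 5, Real.sqrt 5 / 2, Complex.I, Complex.I, 1,
    by positivity, by linarith, ?_, by simp, one_pos, ?_⟩
  · simp only [Complex.I_re, Complex.I_im, ha2, hb2]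
    norm_num
  · have hset : ({q : ℂ | ‖q - Complex.I‖ = 1 - ((q - Complex.I) * (starRingEnd ℂ) Complex.I).re} ∩
        {q : ℂ | q.re ^ 2 / (Real.sqrt 5) ^ 2 + q.im ^ 2 / (Real.sqrt 5 / 2) ^ 2 = 1}) =
        {1 + Complex.I, -1 + Complex.I, 2 - Complex.I/2, -2 - Complex.I/2} := by
      ext q
      have hre : ((q - Complex.I) * (starRingEnd ℂ) Complex.I).re = q.im - 1 := by
        simp [Complex.mul_re]
      simp only [Set.mem_inter_iff, Set.mem_setOf_eq, Set.mem_insert_iff,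
        Set.mem_singleton_iff, hre, ha2, hb2]
      constructor
      · rintro ⟨hP, hE⟩
        obtain ⟨hsq, hc⟩ := sq_of_norm_eq _ _ hP
        simp only [Complex.sub_re, Complex.sub_im, Complex.I_re, Complex.I_im] at hsq
        have hx2 : q.re ^ 2 = 3 - 2 * q.im := by nlinarith
        have hE' : q.re ^ 2 / 5 + q.im ^ 2 / (5/4) = 1 := hE
        have hy : (q.im - 1) * (2 * q.im + 1) = 0 := by nlinarith
        rcases mul_eq_zero.mp hy with hy1 | hy2
        · have hy' : q.im = 1 := by linarith
          have : (q.re - 1) * (q.re + 1) = 0 := by nlinarith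
          rcases mul_eq_zero.mp this with h | h
          · have hx : q.re = 1 := by linarith
            exact Or.inl (by simp [Complex.ext_iff, hx, hy'])
          · have hx : q.re = -1 := by linarith
            exact Or.inr (Or.inl (by simp [Complex.ext_iff, hx, hy']))
        · have hy' : q.im = -(1/2) := by linarith
          have : (q.re - 2) * (q.re + 2) = 0 := by nlinarith
          rcases mul_eq_zero.mp this with h | h
          · have hx : q.re = 2 := by linarith
            exact Or.inr (Or.inr (Or.inl (by simp [Complex.ext_iff, hx, hy'])))
          · have hx : q.re = -2 := by linarith
            exact Or.inr (Or.inr (Or.inr (by simp [Complex.ext_iff, hx, hy'])))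
      · rintro (h | h | h | h) <;> subst h
        · refine ⟨?_, by norm_num⟩
          rw [show (1:ℝ) - ((1 + Complex.I).im - 1) = 1 by simp]
          exact norm_eq_of_sq _ 1 (by norm_num) (by norm_num)
        · refine ⟨?_, by norm_num⟩
          rw [show (1:ℝ) - ((-1 + Complex.I).im - 1) = 1 by simp]
          exact norm_eq_of_sq _ 1 (by norm_num) (by norm_num)
        · refine ⟨?_, by norm_num⟩
          rw [show (1:ℝ) - ((2 - Complex.I/2).im - 1) = 5/2 by norm_num]
          exact norm_eq_of_sq _ (5/2) (by norm_num) (by norm_num)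
        · refine ⟨?_, by norm_num⟩
          rw [show (1:ℝ) - ((-2 - Complex.I/2).im - 1) = 5/2 by norm_num]
          exact norm_eq_of_sq _ (5/2) (by norm_num) (by norm_num)
    rw [hset]
    rw [Set.encard_insert_of_notMem (by simp [Complex.ext_iff]; norm_num),
        Set.encard_insert_of_notMem (by simp [Complex.ext_iff]; norm_num),
        Set.encard_insert_of_notMem (by simp [Complex.ext_iff]; norm_num),
        Set.encard_singleton]
    rfl
end

section
/- The image under the complex square map of a compact, strictly convex, centrally symmetric domain containing 0 in its interior is K-convex: every parabola focused at 0 meets the image's boundary in at most two points. -/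
open Complex

private lemma aux_encard_le_two_of {α : Type*} (s : Set α)
    (h : ∀ a ∈ s, ∀ b ∈ s, ∀ c ∈ s, a = b ∨ a = c ∨ b = c) : s.encard ≤ 2 := by
  rcases s.eq_empty_or_nonempty with rfl | ⟨a, ha⟩
  · simp
  by_cases hs : ∃ b ∈ s, b ≠ a
  · obtain ⟨b, hb, hba⟩ := hs
    have hsub : s ⊆ {a, b} := by
      intro c hc
      rcases h a ha b hb c hc with h1 | h1 | h1
      · exact absurd h1.symm hba
      · exact Or.inl h1.symm
      · exact Or.inr h1.symm
    calc s.encard ≤ ({a, b} : Set α).encard := Set.encard_mono hsub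
      _ = 2 := Set.encard_pair hba.symm
  · push_neg at hs
    have hsub : s ⊆ {a} := fun c hc => hs c hc
    exact le_trans (Set.encard_mono hsub) (by simp)

private lemma aux_mem_frontier_iff {s : Set ℂ} {x : ℂ} :
    x ∈ frontier s ↔ x ∈ closure s ∧ x ∉ interior s := Iff.rfl

private lemma aux_sq_isOpenMap : IsOpenMap (fun z : ℂ => z ^ 2) := by
  have h : AnalyticOnNhd ℂ (fun z : ℂ => z ^ 2) Set.univ :=
    (analyticOnNhd_id (𝕜 := ℂ) (E := ℂ) (s := Set.univ)).pow 2
  rcases h.is_constant_or_isOpen isPreconnected_univ with ⟨w, hw⟩ | h2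
  · exfalso
    have h0 := hw 0 trivial
    have h1 := hw 1 trivial
    norm_num at h0 h1
    rw [← h0] at h1
    exact one_ne_zero h1
  · intro s hs
    exact h2 s (Set.subset_univ s) hs

/-- The image under the complex square map of a compact, strictly convex,
centrally symmetric domain containing 0 in its interior is K-convex: every
parabola focused at 0 meets the image's boundary in at most two points. -/
theorem square_image_of_strictly_convex_symmetric_is_K_convex
    (B : Set ℂ) (hBcpt : IsCompact B) (hBconv : Convex ℝ B)
    (hBstrict : StrictConvex ℝ B)
    (h0 : (0 : ℂ) ∈ interior B) (hsymm : B = -B)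
    (u : ℂ) (hu : ‖u‖ = 1) (d : ℝ) (hd : 0 < d) :
    (frontier ((fun z : ℂ => z ^ 2) '' B) ∩
      {q : ℂ | ‖q‖ = d - (q * (starRingEnd ℂ) u).re}).encard ≤ 2 := by
  classical
  set f : ℂ → ℂ := fun z => z ^ 2 with hf
  set D : Set ℂ := f '' B with hD
  set P : Set ℂ := {q : ℂ | ‖q‖ = d - (q * (starRingEnd ℂ) u).re} with hP
  -- a square root of conj u
  obtain ⟨v, hv2⟩ : ∃ v : ℂ, v ^ 2 = (starRingEnd ℂ) u :=
    ⟨((starRingEnd ℂ) u) ^ (((2 : ℕ) : ℂ))⁻¹,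
      Complex.cpow_nat_inv_pow _ two_ne_zero⟩
  have hvnorm : ‖v‖ = 1 := by
    have h1 : ‖v‖ ^ 2 = 1 := by
      rw [← norm_pow, hv2, RCLike.norm_conj, hu]
    nlinarith [norm_nonneg v]
  have hvne : v ≠ 0 := by
    intro h; rw [h] at hvnorm; simp at hvnorm
  -- the key algebraic identity
  have key : ∀ z : ℂ, ‖z ^ 2‖ + ((z ^ 2) * (starRingEnd ℂ) u).re
      = 2 * ((z * v).re) ^ 2 := by
    intro z
    have h1 : z ^ 2 * (starRingEnd ℂ) u = (z * v) * (z * v) := by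
      rw [← hv2]; ring
    have h2 : ‖z ^ 2‖ = (z * v).re ^ 2 + (z * v).im ^ 2 := by
      have h3 : ‖z ^ 2‖ = ‖z * v‖ ^ 2 := by
        rw [norm_pow, norm_mul, hvnorm, mul_one]
      rw [h3, Complex.sq_norm, Complex.normSq_apply]
      ring
    have h4 : ((z * v) * (z * v)).re = (z * v).re ^ 2 - (z * v).im ^ 2 := by
      rw [Complex.mul_re]; ring
    rw [h1, h2, h4]
    ring
  set c : ℝ := Real.sqrt (d / 2) with hcdef
  have hc : 0 < c := Real.sqrt_pos.2 (by linarith)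
  have hc2 : c ^ 2 = d / 2 := Real.sq_sqrt (by linarith)
  set L : Set ℂ := {z : ℂ | (z * v).re = c} with hL
  -- Step A : frontier D ⊆ f '' frontier B
  have hDcl : IsClosed D := (hBcpt.image (continuous_pow 2)).isClosed
  have stepA : frontier D ⊆ f '' frontier B := by
    intro q hq
    have hqD : q ∈ D := hDcl.frontier_subset hq
    obtain ⟨z, hzB, rfl⟩ := hqD
    refine ⟨z, ?_, rfl⟩
    have hnotint : z ∉ interior B := by
      intro hzi
      have hopen : IsOpen (f '' interior B) := aux_sq_isOpenMap _ isOpen_interior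
      have hmem : f z ∈ interior D :=
        interior_maximal (Set.image_mono (f := f) interior_subset) hopen ⟨z, hzi, rfl⟩
      exact (aux_mem_frontier_iff.1 hq).2 hmem
    exact aux_mem_frontier_iff.2 ⟨subset_closure hzB, hnotint⟩
  -- symmetry of frontier B
  have hfr_neg : ∀ w : ℂ, w ∈ frontier B → -w ∈ frontier B := by
    intro w hw
    have hBpre : -B = (Homeomorph.neg ℂ) ⁻¹' B := by
      ext x; simp [Set.mem_neg]
    have hfr : frontier B = (Homeomorph.neg ℂ) ⁻¹' (frontier B) := by
      conv_lhs => rw [hsymm, hBpre, ← Homeomorph.preimage_frontier]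
    rw [hfr]
    simpa using hw
  have hBclosed : IsClosed B := hBcpt.isClosed
  have hfr_subB : frontier B ⊆ B := hBclosed.frontier_subset
  -- Step B : frontier B ∩ L has at most two points
  set S : Set ℂ := frontier B ∩ L with hS
  have himinj : ∀ a ∈ S, ∀ b ∈ S, (a * v).im = (b * v).im → a = b := by
    intro a ha b hb him
    have hra : (a * v).re = c := ha.2
    have hrb : (b * v).re = c := hb.2
    have : a * v = b * v := Complex.ext (by rw [hra, hrb]) him
    exact mul_right_cancel₀ hvne this
  have hbetween : ∀ a b m : ℂ, a ∈ S → b ∈ S → m ∈ S →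
      (a * v).im < (m * v).im → (m * v).im < (b * v).im → False := by
    intro a b m ha hb hm h1 h2
    have hyab : (a * v).im < (b * v).im := lt_trans h1 h2
    have hden : (b * v).im - (a * v).im ≠ 0 := by linarith
    obtain ⟨s, hsdef⟩ : ∃ s : ℝ,
        s = ((m * v).im - (a * v).im) / ((b * v).im - (a * v).im) := ⟨_, rfl⟩
    have hs0 : 0 < s := by
      rw [hsdef]; exact div_pos (by linarith) (by linarith)
    have hs1 : s < 1 := by
      rw [hsdef]; exact (div_lt_one (by linarith)).2 (by linarith)
    have habne : a ≠ b := by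
      intro h
      rw [h] at h1
      linarith
    have hra : (a * v).re = c := ha.2
    have hrb : (b * v).re = c := hb.2
    have hrm : (m * v).re = c := hm.2
    have hcomb : (1 - s) • a + s • b = m := by
      have hmul : ((1 - s) • a + s • b) * v = m * v := by
        rw [add_mul, smul_mul_assoc, smul_mul_assoc]
        apply Complex.ext
        · simp only [Complex.add_re, Complex.smul_re, smul_eq_mul]
          rw [hra, hrb, hrm]
          ring
        · have hgen : ∀ ya yb ym : ℝ, yb - ya ≠ 0 →
              (1 - (ym - ya) / (yb - ya)) * ya + ((ym - ya) / (yb - ya)) * yb = ym := by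
            intro ya yb ym h
            field_simp
            ring
          simp only [Complex.add_im, Complex.smul_im, smul_eq_mul]
          rw [hsdef]
          exact hgen _ _ _ hden
      exact mul_right_cancel₀ hvne hmul
    have hint : m ∈ interior B := by
      rw [← hcomb]
      exact hBstrict (hfr_subB ha.1) (hfr_subB hb.1) habne
        (by linarith) hs0 (by ring)
    exact (aux_mem_frontier_iff.1 hm.1).2 hint
  have stepB : S.encard ≤ 2 := by
    apply aux_encard_le_two_of
    intro a ha b hb e he
    by_contra hcon
    push_neg at hcon
    obtain ⟨hab, hae, hbe⟩ := hcon
    have hyab : (a * v).im ≠ (b * v).im := fun h => hab (himinj a ha b hb h)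
    have hyae : (a * v).im ≠ (e * v).im := fun h => hae (himinj a ha e he h)
    have hybe : (b * v).im ≠ (e * v).im := fun h => hbe (himinj b hb e he h)
    rcases lt_or_gt_of_ne hyab with h1 | h1 <;>
      rcases lt_or_gt_of_ne hyae with h2 | h2 <;>
        rcases lt_or_gt_of_ne hybe with h3 | h3
    · exact hbetween a e b ha he hb h1 h3
    · exact hbetween a b e ha hb he h2 h3
    · exact absurd h3 (by exact not_lt.2 (le_of_lt (lt_trans h2 h1)))
    · exact hbetween e b a he hb ha h2 h1
    · exact hbetween b e a hb he ha h1 h2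
    · exact absurd h2 (by exact not_lt.2 (le_of_lt (lt_trans h3 h1)))
    · exact hbetween b a e hb ha he h3 h2
    · exact hbetween e a b he ha hb h3 h1
  -- the root-selecting map
  set g : ℂ → ℂ := fun q =>
    if 0 ≤ ((q ^ (((2 : ℕ) : ℂ))⁻¹) * v).re then q ^ (((2 : ℕ) : ℂ))⁻¹
    else -(q ^ (((2 : ℕ) : ℂ))⁻¹) with hgdef
  have hroot : ∀ q : ℂ, (g q) ^ 2 = q := by
    intro q
    have hq2 : (q ^ (((2 : ℕ) : ℂ))⁻¹) ^ 2 = q :=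
      Complex.cpow_nat_inv_pow _ two_ne_zero
    show (if 0 ≤ ((q ^ (((2 : ℕ) : ℂ))⁻¹) * v).re then q ^ (((2 : ℕ) : ℂ))⁻¹
      else -(q ^ (((2 : ℕ) : ℂ))⁻¹)) ^ 2 = q
    by_cases h : 0 ≤ ((q ^ (((2 : ℕ) : ℂ))⁻¹) * v).re
    · rw [if_pos h]; exact hq2
    · rw [if_neg h, neg_pow, hq2]
      norm_num
  have hnonneg : ∀ q : ℂ, 0 ≤ (g q * v).re := by
    intro q
    show 0 ≤ ((if 0 ≤ ((q ^ (((2 : ℕ) : ℂ))⁻¹) * v).re then q ^ (((2 : ℕ) : ℂ))⁻¹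
      else -(q ^ (((2 : ℕ) : ℂ))⁻¹)) * v).re
    by_cases h : 0 ≤ ((q ^ (((2 : ℕ) : ℂ))⁻¹) * v).re
    · rw [if_pos h]; exact h
    · rw [if_neg h, neg_mul, Complex.neg_re]
      linarith [not_le.1 h]
  -- MapsTo
  have hmaps : Set.MapsTo g (frontier D ∩ P) S := by
    intro q hq
    obtain ⟨w, hwfr, hwq⟩ := stepA hq.1
    have hgw : g q = w ∨ g q = -w := by
      have h1 : (g q) ^ 2 = w ^ 2 := by rw [hroot q, ← hwq]
      exact sq_eq_sq_iff_eq_or_eq_neg.1 h1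
    have hgfr : g q ∈ frontier B := by
      rcases hgw with h | h
      · rw [h]; exact hwfr
      · rw [h]; exact hfr_neg w hwfr
    refine ⟨hgfr, ?_⟩
    -- the parabola condition
    have hqP : ‖q‖ = d - (q * (starRingEnd ℂ) u).re := hq.2
    have hkey := key (g q)
    rw [hroot q] at hkey
    have hr2 : ((g q * v).re) ^ 2 = d / 2 := by
      rw [hqP] at hkey; linarith
    have hfac : ((g q * v).re - c) * ((g q * v).re + c) = 0 := by
      have heq : ((g q * v).re - c) * ((g q * v).re + c)
          = ((g q * v).re) ^ 2 - c ^ 2 := by ring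
      rw [heq, hr2, hc2]; ring
    rcases mul_eq_zero.1 hfac with h | h
    · show (g q * v).re = c
      linarith
    · exfalso
      have := hnonneg q
      linarith
  -- Injectivity
  have hinj : Set.InjOn g (frontier D ∩ P) := by
    intro q hq q' hq' h
    rw [← hroot q, ← hroot q', h]
  calc (frontier D ∩ P).encard = (g '' (frontier D ∩ P)).encard :=
        (hinj.encard_image).symm
    _ ≤ S.encard := Set.encard_mono hmaps.image_subset
    _ ≤ 2 := stepB
end
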